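/- (Recovery of the derivative of the right factor in the non-square case.) Let m ≥ n ≥ 1 and let A : ℝ → ℂ^{n×m}, U : ℝ → ℂ^{n×n}, S : ℝ → ℂ^{n×n}, V : ℝ → ℂ^{m×n} be differentiable at t₀ with A(t) = U(t) S(t) V(t)* for all t in a neighborhood of t₀, where U(t) is unitary, V(t)* V(t) = 𝟙_n, and S(t) is diagonal with real entries, invertible at t₀. Then V'(t₀)* = (V(t₀)* V'(t₀))* · V(t₀)* + S(t₀)^{−1} · U(t₀)* · A'(t₀) · (𝟙_m − V(t₀) V(t₀)*); equivalently, V'(t₀) = V(t₀)·(V(t₀)* V'(t₀)) + (𝟙_m − V(t₀) V(t₀)*) · A'(t₀)* · U(t₀) · S(t₀)^{−1}. -/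

import Mathlib

/-!
Differentiating `A = U S Vᴴ` at `t₀` gives `A' = (U' S + U S') Vᴴ + U S V'ᴴ`. The projection
`P = 1 - V Vᴴ` onto the orthogonal complement of the columns of `V` kills `Vᴴ` from the right,
so `A' P = U S V'ᴴ P`; cancelling the unitary `U` and the invertible `S` recovers `V'ᴴ P`, which is
the component of `V'ᴴ` not already determined by `Vᴴ V'`.
-/

open Matrix

section EntrywiseDerivative

variable {l m n : Type*}

/-- Matrices carry no global norm in Mathlib, so derivatives of matrix paths are taken
entrywise. -/
def HasEntrywiseDerivAt (M : ℝ → Matrix m n ℂ) (M' : Matrix m n ℂ) (t : ℝ) : Prop :=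
  ∀ i j, HasDerivAt (fun s => M s i j) (M' i j) t

variable {M : ℝ → Matrix m n ℂ} {M' M₁' : Matrix m n ℂ} {t : ℝ}

theorem HasEntrywiseDerivAt.unique (h : HasEntrywiseDerivAt M M' t)
    (h₁ : HasEntrywiseDerivAt M M₁' t) : M' = M₁' :=
  Matrix.ext fun i j => (h i j).unique (h₁ i j)

theorem HasEntrywiseDerivAt.congr_of_eventuallyEq {M₁ : ℝ → Matrix m n ℂ}
    (h : HasEntrywiseDerivAt M M' t) (hM : M₁ =ᶠ[nhds t] M) : HasEntrywiseDerivAt M₁ M' t :=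
  fun i j => (h i j).congr_of_eventuallyEq (hM.mono fun _ hs => congrFun (congrFun hs i) j)

theorem HasEntrywiseDerivAt.conjTranspose (h : HasEntrywiseDerivAt M M' t) :
    HasEntrywiseDerivAt (fun s => (M s)ᴴ) M'ᴴ t :=
  fun i j => (h j i).star

theorem HasEntrywiseDerivAt.mul [Fintype n] {N : ℝ → Matrix n l ℂ} {N' : Matrix n l ℂ}
    (hM : HasEntrywiseDerivAt M M' t) (hN : HasEntrywiseDerivAt N N' t) :
    HasEntrywiseDerivAt (fun s => M s * N s) (M' * N t + M t * N') t := by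
  intro i k
  simp only [Matrix.add_apply, mul_apply, ← Finset.sum_add_distrib]
  exact HasDerivAt.fun_sum fun j _ => (hM i j).fun_mul (hN j k)

theorem hasEntrywiseDerivAt_diagonal_ofReal [DecidableEq n] {d : n → ℝ → ℝ} {d' : n → ℝ}
    (hd : ∀ i, HasDerivAt (d i) (d' i) t) :
    HasEntrywiseDerivAt (fun s => diagonal fun i => (d i s : ℂ))
      (diagonal fun i => (d' i : ℂ)) t := by
  intro i j
  by_cases hij : i = j
  · subst hij
    simpa only [diagonal_apply_eq] using (hd i).ofReal_comp
  · simpa only [diagonal_apply_ne _ hij] using hasDerivAt_const t (0 : ℂ)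

end EntrywiseDerivative

section RightFactor

variable {R : Type*} [CommRing R] [StarRing R] {m n : Type*} [Fintype m] [Fintype n]
  [DecidableEq m] [DecidableEq n]

theorem conjTranspose_eq_of_eq_add_mul_conjTranspose {U S X : Matrix n n R} {V V' : Matrix m n R}
    {A' : Matrix n m R} (hU : Uᴴ * U = 1) (hV : Vᴴ * V = 1) (hS : IsUnit S)
    (hA' : A' = X * Vᴴ + U * S * V'ᴴ) :
    V'ᴴ = (Vᴴ * V')ᴴ * Vᴴ + S⁻¹ * Uᴴ * A' * (1 - V * Vᴴ) := by
  have hVP : Vᴴ * (1 - V * Vᴴ) = 0 := by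
    rw [Matrix.mul_sub, Matrix.mul_one, ← Matrix.mul_assoc, hV, Matrix.one_mul, sub_self]
  have hSS : S⁻¹ * S = 1 := S.nonsing_inv_mul ((S.isUnit_iff_isUnit_det).mp hS)
  have hA'P : S⁻¹ * Uᴴ * A' * (1 - V * Vᴴ) = V'ᴴ * (1 - V * Vᴴ) := by
    calc S⁻¹ * Uᴴ * A' * (1 - V * Vᴴ)
        = S⁻¹ * Uᴴ * X * (Vᴴ * (1 - V * Vᴴ))
          + (S⁻¹ * (Uᴴ * U) * S) * V'ᴴ * (1 - V * Vᴴ) := by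
          rw [hA']; simp only [Matrix.mul_add, Matrix.add_mul, Matrix.mul_assoc]
      _ = V'ᴴ * (1 - V * Vᴴ) := by
          rw [hVP, hU, Matrix.mul_one, hSS, Matrix.mul_zero, zero_add, Matrix.one_mul]
  rw [hA'P, conjTranspose_mul, conjTranspose_conjTranspose, Matrix.mul_sub, Matrix.mul_one,
    Matrix.mul_assoc]
  abel

theorem eq_add_of_conjTranspose_eq_add {U S : Matrix n n R} {V V' : Matrix m n R}
    {A' : Matrix n m R} (hS : S.IsHermitian)
    (h : V'ᴴ = (Vᴴ * V')ᴴ * Vᴴ + S⁻¹ * Uᴴ * A' * (1 - V * Vᴴ)) :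
    V' = V * (Vᴴ * V') + (1 - V * Vᴴ) * A'ᴴ * U * S⁻¹ := by
  have hP : (1 - V * Vᴴ)ᴴ = 1 - V * Vᴴ := by
    rw [conjTranspose_sub, conjTranspose_one, conjTranspose_mul, conjTranspose_conjTranspose]
  simpa only [conjTranspose_add, conjTranspose_mul, conjTranspose_conjTranspose, hP,
    hS.inv.eq, Matrix.mul_assoc] using congrArg conjTranspose h

end RightFactor

theorem deriv_right_factor_nonsquare_general (n m : ℕ)
    (A : ℝ → Matrix (Fin n) (Fin m) ℂ) (U : ℝ → Matrix (Fin n) (Fin n) ℂ)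
    (V : ℝ → Matrix (Fin m) (Fin n) ℂ)
    (s : Fin n → ℝ → ℝ) (t₀ : ℝ)
    (A' : Matrix (Fin n) (Fin m) ℂ) (U' : Matrix (Fin n) (Fin n) ℂ)
    (V' : Matrix (Fin m) (Fin n) ℂ) (s' : Fin n → ℝ)
    (hA' : ∀ i j, HasDerivAt (fun t => A t i j) (A' i j) t₀)
    (hU' : ∀ i j, HasDerivAt (fun t => U t i j) (U' i j) t₀)
    (hV' : ∀ i j, HasDerivAt (fun t => V t i j) (V' i j) t₀)
    (hs' : ∀ i, HasDerivAt (s i) (s' i) t₀)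
    (hU : ∀ᶠ t in nhds t₀, U t ∈ Matrix.unitaryGroup (Fin n) ℂ)
    (hV : ∀ᶠ t in nhds t₀, (V t)ᴴ * V t = 1)
    (hSVD : ∀ᶠ t in nhds t₀,
      A t = U t * Matrix.diagonal (fun i => ((s i t : ℝ) : ℂ)) * (V t)ᴴ)
    (hinv : ∀ i, s i t₀ ≠ 0) :
    V'ᴴ = ((V t₀)ᴴ * V')ᴴ * (V t₀)ᴴ
        + (Matrix.diagonal (fun i => ((s i t₀ : ℝ) : ℂ)))⁻¹ * (U t₀)ᴴ * A'
            * (1 - V t₀ * (V t₀)ᴴ) ∧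
      V' = V t₀ * ((V t₀)ᴴ * V')
        + (1 - V t₀ * (V t₀)ᴴ) * A'ᴴ * U t₀
            * (Matrix.diagonal (fun i => ((s i t₀ : ℝ) : ℂ)))⁻¹ := by
  set S : ℝ → Matrix (Fin n) (Fin n) ℂ := fun t => diagonal fun i => (s i t : ℂ)
  have hA'_eq : A' = (U' * S t₀ + U t₀ * diagonal fun i => (s' i : ℂ)) * (V t₀)ᴴ
      + U t₀ * S t₀ * V'ᴴ :=
    (show HasEntrywiseDerivAt A A' t₀ from hA').unique <|
      ((HasEntrywiseDerivAt.mul hU' (hasEntrywiseDerivAt_diagonal_ofReal hs')).mul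
        (HasEntrywiseDerivAt.conjTranspose hV')).congr_of_eventuallyEq hSVD
  have hUt : (U t₀)ᴴ * U t₀ = 1 := mem_unitaryGroup_iff'.mp hU.self_of_nhds
  have hSt : IsUnit (S t₀) :=
    isUnit_diagonal.mpr (Pi.isUnit_iff.mpr fun i => by simpa using hinv i)
  have hSH : (S t₀).IsHermitian :=
    isHermitian_diagonal_of_self_adjoint _ (funext fun i => Complex.conj_ofReal (s i t₀))
  have hVt := conjTranspose_eq_of_eq_add_mul_conjTranspose hUt hV.self_of_nhds hSt hA'_eq
  exact ⟨hVt, eq_add_of_conjTranspose_eq_add hSH hVt⟩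

/-- **Recovery of the derivative of the right factor in the non-square case.** For a
differentiable SVD path `A(t) = U(t) S(t) V(t)ᴴ` with `A : ℝ → ℂ^{n×m}` (`m ≥ n`),
`U(t)` unitary (`n×n`), `V : ℝ → ℂ^{m×n}` with `V(t)ᴴ V(t) = 𝟙ₙ`, and `S(t)` real diagonal
and invertible at `t₀`:
`V'(t₀)ᴴ = (V(t₀)ᴴ V'(t₀))ᴴ V(t₀)ᴴ + S(t₀)⁻¹ U(t₀)ᴴ A'(t₀) (𝟙ₘ − V(t₀) V(t₀)ᴴ)`;
equivalently
`V'(t₀) = V(t₀) (V(t₀)ᴴ V'(t₀)) + (𝟙ₘ − V(t₀) V(t₀)ᴴ) A'(t₀)ᴴ U(t₀) S(t₀)⁻¹`. -/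
theorem deriv_right_factor_nonsquare (n m : ℕ) (hn : 1 ≤ n) (hnm : n ≤ m)
    (A : ℝ → Matrix (Fin n) (Fin m) ℂ) (U : ℝ → Matrix (Fin n) (Fin n) ℂ)
    (V : ℝ → Matrix (Fin m) (Fin n) ℂ)
    (s : Fin n → ℝ → ℝ) (t₀ : ℝ)
    (A' : Matrix (Fin n) (Fin m) ℂ) (U' : Matrix (Fin n) (Fin n) ℂ)
    (V' : Matrix (Fin m) (Fin n) ℂ) (s' : Fin n → ℝ)
    (hA' : ∀ i j, HasDerivAt (fun t => A t i j) (A' i j) t₀)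
    (hU' : ∀ i j, HasDerivAt (fun t => U t i j) (U' i j) t₀)
    (hV' : ∀ i j, HasDerivAt (fun t => V t i j) (V' i j) t₀)
    (hs' : ∀ i, HasDerivAt (s i) (s' i) t₀)
    (hU : ∀ᶠ t in nhds t₀, U t ∈ Matrix.unitaryGroup (Fin n) ℂ)
    (hV : ∀ᶠ t in nhds t₀, (V t)ᴴ * V t = 1)
    (hSVD : ∀ᶠ t in nhds t₀,
      A t = U t * Matrix.diagonal (fun i => ((s i t : ℝ) : ℂ)) * (V t)ᴴ)
    (hinv : ∀ i, s i t₀ ≠ 0) :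
    V'ᴴ = ((V t₀)ᴴ * V')ᴴ * (V t₀)ᴴ
        + (Matrix.diagonal (fun i => ((s i t₀ : ℝ) : ℂ)))⁻¹ * (U t₀)ᴴ * A'
            * (1 - V t₀ * (V t₀)ᴴ) ∧
      V' = V t₀ * ((V t₀)ᴴ * V')
        + (1 - V t₀ * (V t₀)ᴴ) * A'ᴴ * U t₀
            * (Matrix.diagonal (fun i => ((s i t₀ : ℝ) : ℂ)))⁻¹ :=
  deriv_right_factor_nonsquare_general n m A U V s t₀ A' U' V' s' hA' hU' hV' hs' hU hV hSVD hinv
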